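/- arXiv:2507.15284 — 2 statements merged into one kernel-verified Lean document; each statement's English description precedes it below -/
import Mathlib

section
/- (Lemma 5.3 of the paper, in trace form.) For α > 0 let H_α := 1 + α/(2r), A₁ := z/(2r), and Υ_α := ρ⁻¹[[αH_α⁻¹A₁² + ρ²α⁻¹H_α, αH_α⁻¹A₁],[αH_α⁻¹A₁, αH_α⁻¹]] on ℍ°. Then: (i) for all (ρ,z) ∈ ℍ°, Tr((L_{1/2}.Φ_{[v₀]})⁻¹ · Υ_α) = ρ⁻²αH_α⁻¹(A₁ + 1/2)² + α⁻¹H_α + αH_α⁻¹, and likewise with L_{−1/2} and (A₁ − 1/2)²; (ii) for every r₀ ∈ (0,1) there is a constant C(r₀) > 0 such that for all α ≥ 1/4 and all (ρ,z) ∈ ℍ° with r₀ < r < 1/r₀: if z < ρ then Tr((L_{1/2}.Φ_{[v₀]})⁻¹ · Υ_α) ≤ C(r₀), and if z > −ρ then Tr((L_{−1/2}.Φ_{[v₀]})⁻¹ · Υ_α) ≤ C(r₀). -/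
noncomputable section

open Real Topology Filter Matrix MeasureTheory

abbrev Mat2 : Type := Matrix (Fin 2) (Fin 2) ℝ

/-- Partial derivative in the first variable (`ρ`). -/
def pd1 (f : ℝ × ℝ → ℝ) (p : ℝ × ℝ) : ℝ := deriv (fun t => f (t, p.2)) p.1

/-- Partial derivative in the second variable (`z`). -/
def pd2 (f : ℝ × ℝ → ℝ) (p : ℝ × ℝ) : ℝ := deriv (fun t => f (p.1, t)) p.2

/-- Entrywise partial derivative (in `ρ`) of a matrix-valued function. -/
def mpd1 (F : ℝ × ℝ → Mat2) (p : ℝ × ℝ) : Mat2 :=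
  Matrix.of fun i j => pd1 (fun q => F q i j) p

/-- Entrywise partial derivative (in `z`) of a matrix-valued function. -/
def mpd2 (F : ℝ × ℝ → Mat2) (p : ℝ × ℝ) : Mat2 :=
  Matrix.of fun i j => pd2 (fun q => F q i j) p

/-- The open right half plane `ℍ° = {(ρ, z) : ρ > 0}`. -/
def Hplane : Set (ℝ × ℝ) := {p | 0 < p.1}

/-- A matrix-valued map is smooth on a set if each entry is `C^∞` there. -/
def SmoothMatOn (F : ℝ × ℝ → Mat2) (U : Set (ℝ × ℝ)) : Prop :=
  ∀ i j, ContDiffOn ℝ (⊤ : ℕ∞) (fun q => F q i j) U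

/-- The axisymmetric harmonic-map equation
`∂_ρ(ρ Φ⁻¹ ∂_ρΦ) + ∂_z(ρ Φ⁻¹ ∂_zΦ) = 0` on `U`. -/
def axiHarmonicOn (Φ : ℝ × ℝ → Mat2) (U : Set (ℝ × ℝ)) : Prop :=
  ∀ p ∈ U,
    mpd1 (fun q => q.1 • ((Φ q)⁻¹ * mpd1 Φ q)) p +
      mpd2 (fun q => q.1 • ((Φ q)⁻¹ * mpd2 Φ q)) p = 0

/-- `𝒰 := I + ρ Φ⁻¹ ∂_ρΦ`. -/
def Umat (Φ : ℝ × ℝ → Mat2) (p : ℝ × ℝ) : Mat2 := 1 + p.1 • ((Φ p)⁻¹ * mpd1 Φ p)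

/-- `𝒱 := ρ Φ⁻¹ ∂_zΦ`. -/
def Vmat (Φ : ℝ × ℝ → Mat2) (p : ℝ × ℝ) : Mat2 := p.1 • ((Φ p)⁻¹ * mpd2 Φ p)

/-- `ν` is an augmentation for `Φ` on `U`. -/
def IsAugmentationOn (Φ : ℝ × ℝ → Mat2) (ν : ℝ × ℝ → ℝ) (U : Set (ℝ × ℝ)) : Prop :=
  ContDiffOn ℝ (⊤ : ℕ∞) ν U ∧ ∀ p ∈ U,
    pd2 ν p = (4 * p.1)⁻¹ * (Umat Φ p * Vmat Φ p).trace ∧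
    pd1 ν p = -(2 * p.1)⁻¹ +
      (8 * p.1)⁻¹ * (Umat Φ p * Umat Φ p - Vmat Φ p * Vmat Φ p).trace

/-- `r = √(ρ² + z²)`. -/
def rr (p : ℝ × ℝ) : ℝ := Real.sqrt (p.1 ^ 2 + p.2 ^ 2)

/-- The action `P.Φ := (P⁻¹)ᵀ Φ P⁻¹` of `GL(2,ℝ)` on matrices. -/
def matAct (P M : Mat2) : Mat2 := (P⁻¹)ᵀ * M * P⁻¹

/-- The action of `GL(2,ℝ)` on matrix-valued maps. -/
def mapAct (P : Mat2) (Φ : ℝ × ℝ → Mat2) : ℝ × ℝ → Mat2 := fun q => matAct P (Φ q)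

/-- `H_α = 1 + α/(2r)`. -/
def Hfun (α : ℝ) (p : ℝ × ℝ) : ℝ := 1 + α / (2 * rr p)

/-- `A₁ = z/(2r)`. -/
def A1 (p : ℝ × ℝ) : ℝ := p.2 / (2 * rr p)

/-- The rescaled anti–Taub-NUT maps `Υ_α`. -/
def Υm (α : ℝ) (p : ℝ × ℝ) : Mat2 :=
  p.1⁻¹ • !![α * (Hfun α p)⁻¹ * (A1 p) ^ 2 + p.1 ^ 2 * α⁻¹ * Hfun α p,
               α * (Hfun α p)⁻¹ * A1 p;
             α * (Hfun α p)⁻¹ * A1 p, α * (Hfun α p)⁻¹]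

/-- `L_μ = [[1,0],[μ,1]]`. -/
def Lm (μ : ℝ) : Mat2 := !![1, 0; μ, 1]

/-- The rod model `Φ_{[v₀]} = diag(ρ, ρ⁻¹)`. -/
def Φv0 (p : ℝ × ℝ) : Mat2 := !![p.1, 0; 0, p.1⁻¹]

/-!
Since `det L_μ = 1`, `(L_μ.Φ_{[v₀]})⁻¹ = L_μ diag(ρ⁻¹, ρ) L_μᵀ`, and the trace identity is a
direct computation. For the bound, `α H_α⁻¹ = 2rα/(2r + α) ≤ 2r` and `α⁻¹ H_α = α⁻¹ + 1/(2r)`,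
while `ρ⁻²(A₁ ± 1/2)² = (z ± r)²/(4r²ρ²)`; with `z = r cos θ`, `ρ = r sin θ` this is
`cot²(θ/2)/(4r²)` (resp. `tan²(θ/2)/(4r²)`), bounded by `2/r²` on the sector `θ > π/4`
(resp. `θ < 3π/4`). On the annulus `r₀ < r < 1/r₀` every term is then bounded in terms of `r₀`.
-/

lemma rr_pos {p : ℝ × ℝ} (hp : p ∈ Hplane) : 0 < rr p :=
  Real.sqrt_pos.mpr (by have : 0 < p.1 := hp; positivity)

lemma rr_sq (p : ℝ × ℝ) : rr p ^ 2 = p.1 ^ 2 + p.2 ^ 2 :=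
  Real.sq_sqrt (by positivity)

lemma Hfun_pos {α : ℝ} (hα : 0 ≤ α) {p : ℝ × ℝ} (hp : p ∈ Hplane) : 0 < Hfun α p := by
  have := rr_pos hp
  unfold Hfun; positivity

lemma inv_matAct {P : Mat2} (hP : IsUnit P.det) (M : Mat2) :
    (matAct P M)⁻¹ = P * M⁻¹ * Pᵀ := by
  rw [matAct, Matrix.mul_inv_rev, Matrix.mul_inv_rev, Matrix.nonsing_inv_nonsing_inv _ hP,
    ← Matrix.transpose_nonsing_inv, Matrix.nonsing_inv_nonsing_inv _ hP, Matrix.mul_assoc]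

lemma det_Lm (μ : ℝ) : (Lm μ).det = 1 := by
  simp [Lm, Matrix.det_fin_two]

lemma inv_Φv0 {p : ℝ × ℝ} (hp : p ∈ Hplane) : (Φv0 p)⁻¹ = !![p.1⁻¹, 0; 0, p.1] := by
  have hρ : p.1 ≠ 0 := ne_of_gt hp
  refine Matrix.inv_eq_right_inv ?_
  simp [Φv0, Matrix.one_fin_two, hρ]

lemma trace_inv_matAct_Lm_Φv0_mul_Υm (μ : ℝ) {α : ℝ} (hα : 0 < α) {p : ℝ × ℝ}
    (hp : p ∈ Hplane) :
    ((matAct (Lm μ) (Φv0 p))⁻¹ * Υm α p).trace =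
      (p.1 ^ 2)⁻¹ * α * (Hfun α p)⁻¹ * (A1 p + μ) ^ 2 + α⁻¹ * Hfun α p +
        α * (Hfun α p)⁻¹ := by
  have hρ : p.1 ≠ 0 := ne_of_gt hp
  have hH : Hfun α p ≠ 0 := (Hfun_pos hα.le hp).ne'
  have hLt : (Lm μ)ᵀ = !![1, μ; 0, 1] := by
    ext i j; fin_cases i <;> fin_cases j <;> rfl
  rw [inv_matAct (by rw [det_Lm]; exact isUnit_one), inv_Φv0 hp, hLt, Lm, Υm]
  simp only [Matrix.smul_of, Matrix.smul_cons, Matrix.smul_empty, smul_eq_mul, Matrix.mul_fin_two,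
    Matrix.trace_fin_two_of]
  field_simp
  ring

/-- On `z < ρ`, `(z + r)²/ρ² = cot²(θ/2) ≤ cot²(π/8) = 3 + 2√2 < 8`. -/
lemma add_sq_le_eight_mul_sq {ρ z r : ℝ} (hr : 0 ≤ r) (hr2 : r ^ 2 = ρ ^ 2 + z ^ 2)
    (hz : z < ρ) : (z + r) ^ 2 ≤ 8 * ρ ^ 2 := by
  have hzr : z < r := by nlinarith
  have hzr' : -r ≤ z := by nlinarith
  have h97 : 9 * z ≤ 7 * r := by nlinarith [sq_nonneg z, sq_nonneg (z - ρ)]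
  nlinarith [mul_nonneg (by linarith : (0:ℝ) ≤ r + z) (by linarith : (0:ℝ) ≤ 7 * r - 9 * z)]

lemma mul_inv_Hfun_le {α : ℝ} (hα : 0 ≤ α) {p : ℝ × ℝ} (hp : p ∈ Hplane) :
    α * (Hfun α p)⁻¹ ≤ 2 * rr p := by
  have hr := rr_pos hp
  rw [mul_inv_le_iff₀ (Hfun_pos hα hp), Hfun, mul_add, mul_one, mul_div_cancel₀ _ (by positivity)]
  linarith

lemma inv_mul_Hfun {α : ℝ} (hα : α ≠ 0) (p : ℝ × ℝ) :
    α⁻¹ * Hfun α p = α⁻¹ + (2 * rr p)⁻¹ := by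
  rw [Hfun, mul_add, mul_one, mul_div, inv_mul_cancel₀ hα, one_div]

lemma inv_sq_mul_sq_A1_add_le (μ : ℝ) {p : ℝ × ℝ} (hp : p ∈ Hplane)
    (hsector : (p.2 + 2 * μ * rr p) ^ 2 ≤ 8 * p.1 ^ 2) :
    (p.1 ^ 2)⁻¹ * (A1 p + μ) ^ 2 ≤ 2 / rr p ^ 2 := by
  have hρ : (0:ℝ) < p.1 := hp
  have hr := rr_pos hp
  have hA : (A1 p + μ) ^ 2 = (p.2 + 2 * μ * rr p) ^ 2 / (4 * rr p ^ 2) := by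
    rw [A1]; field_simp; ring
  rw [hA, inv_mul_eq_div, div_div, div_le_div_iff₀ (by positivity) (by positivity)]
  nlinarith

lemma trace_formula_le (μ : ℝ) {α : ℝ} (hα : 1 / 4 ≤ α) {p : ℝ × ℝ} (hp : p ∈ Hplane)
    (hsector : (p.2 + 2 * μ * rr p) ^ 2 ≤ 8 * p.1 ^ 2) :
    (p.1 ^ 2)⁻¹ * α * (Hfun α p)⁻¹ * (A1 p + μ) ^ 2 + α⁻¹ * Hfun α p + α * (Hfun α p)⁻¹ ≤
      4 + 9 / (2 * rr p) + 2 * rr p := by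
  have hα0 : 0 < α := by linarith
  have hr := rr_pos hp
  have hHα := mul_inv_Hfun_le hα0.le hp
  have hinv : α⁻¹ ≤ 4 := by
    simpa using inv_anti₀ (by norm_num : (0:ℝ) < 1 / 4) hα
  have hfirst : (p.1 ^ 2)⁻¹ * α * (Hfun α p)⁻¹ * (A1 p + μ) ^ 2 ≤ 4 / rr p :=
    calc (p.1 ^ 2)⁻¹ * α * (Hfun α p)⁻¹ * (A1 p + μ) ^ 2
        = α * (Hfun α p)⁻¹ * ((p.1 ^ 2)⁻¹ * (A1 p + μ) ^ 2) := by ring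
      _ ≤ 2 * rr p * (2 / rr p ^ 2) :=
          mul_le_mul hHα (inv_sq_mul_sq_A1_add_le μ hp hsector) (by positivity) (by positivity)
      _ = 4 / rr p := by field_simp; ring
  rw [inv_mul_Hfun hα0.ne']
  have : 4 / rr p + (2 * rr p)⁻¹ = 9 / (2 * rr p) := by field_simp; ring
  linarith

lemma four_add_div_add_mul_le {r₀ r : ℝ} (hr₀ : 0 < r₀) (h₁ : r₀ < r) (h₂ : r < 1 / r₀) :
    4 + 9 / (2 * r) + 2 * r ≤ 4 + 13 / (2 * r₀) := by
  have h₁' : 9 / (2 * r) ≤ 9 / (2 * r₀) := by gcongr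
  have h₂' : 2 * r ≤ 4 / (2 * r₀) := by
    rw [show 4 / (2 * r₀) = 2 * (1 / r₀) by field_simp; ring]; linarith
  have : 9 / (2 * r₀) + 4 / (2 * r₀) = 13 / (2 * r₀) := by ring
  linarith

/-- **Lemma 5.3, trace form.** (i) trace identities for
`Tr((L_{±1/2}.Φ_{[v₀]})⁻¹ Υ_α)`; (ii) for every `r₀ ∈ (0,1)` there is `C(r₀) > 0`
bounding these traces uniformly for `α ≥ 1/4` and `r₀ < r < 1/r₀`, on the respective
sectors `z < ρ` and `z > −ρ`. -/
theorem stmt12 :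
    (∀ α : ℝ, 0 < α → ∀ p ∈ Hplane,
      ((matAct (Lm (1 / 2)) (Φv0 p))⁻¹ * Υm α p).trace =
        (p.1 ^ 2)⁻¹ * α * (Hfun α p)⁻¹ * (A1 p + 1 / 2) ^ 2 +
          α⁻¹ * Hfun α p + α * (Hfun α p)⁻¹ ∧
      ((matAct (Lm (-(1 / 2))) (Φv0 p))⁻¹ * Υm α p).trace =
        (p.1 ^ 2)⁻¹ * α * (Hfun α p)⁻¹ * (A1 p - 1 / 2) ^ 2 +
          α⁻¹ * Hfun α p + α * (Hfun α p)⁻¹) ∧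
    (∀ r₀ : ℝ, 0 < r₀ → r₀ < 1 → ∃ C : ℝ, 0 < C ∧
      ∀ α : ℝ, 1 / 4 ≤ α → ∀ p ∈ Hplane, r₀ < rr p → rr p < 1 / r₀ →
        (p.2 < p.1 → ((matAct (Lm (1 / 2)) (Φv0 p))⁻¹ * Υm α p).trace ≤ C) ∧
        (-p.1 < p.2 → ((matAct (Lm (-(1 / 2))) (Φv0 p))⁻¹ * Υm α p).trace ≤ C)) := by
  refine ⟨fun α hα p hp => ⟨trace_inv_matAct_Lm_Φv0_mul_Υm _ hα hp, ?_⟩, fun r₀ hr₀ _ => ?_⟩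
  · rw [trace_inv_matAct_Lm_Φv0_mul_Υm _ hα hp, sub_eq_add_neg]
  refine ⟨4 + 13 / (2 * r₀), by positivity, fun α hα p hp h₁ h₂ => ⟨fun hz => ?_, fun hz => ?_⟩⟩
  all_goals
    rw [trace_inv_matAct_Lm_Φv0_mul_Υm _ (by linarith) hp]
    refine (trace_formula_le _ hα hp ?_).trans (four_add_div_add_mul_le hr₀ h₁ h₂)
  · convert add_sq_le_eight_mul_sq (rr_pos hp).le (rr_sq p) hz using 1; ring
  · have hrefl : rr p ^ 2 = p.1 ^ 2 + (-p.2) ^ 2 := by rw [rr_sq, neg_sq]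
    convert add_sq_le_eight_mul_sq (rr_pos hp).le hrefl (by linarith) using 1; ring
end
end

section
/- (Proposition 3.10 of the paper, AF case, in reduced coordinates.) Let n ≥ 1 and define T_n^{AF} := {(v₁,…,v_n) ∈ ℝⁿ : 0 < v₁ < π, 0 < v_j − v_{j−1} < π for 2 ≤ j ≤ n, and v_n ∈ πℤ}. Then: (a) for each integer k, the set {v ∈ T_n^{AF} : v_n = kπ} is convex, and it is nonempty exactly when 1 ≤ k ≤ n−1; (b) two points v, w ∈ T_n^{AF} lie in the same path component of T_n^{AF} if and only if v_n = w_n; (c) consequently T_n^{AF} has exactly n−1 path components, and T₁^{AF} = ∅. -/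
/-!
Gaps `v_j - v_{j-1}` and the last angle `v_n` are linear in `v`, so each slice `{v_n = kπ}` is
cut out by affine conditions and is convex, hence path connected. The `n` gaps lie in `(0, π)`,
so `0 < v_n < nπ` and only `1 ≤ k ≤ n - 1` occur, while equal gaps `kπ/n` realise each such `k`.
Conversely `v_n` is continuous with values in the discrete set `πℤ`, so it is constant along
paths in `T_n^{AF}`. Hence the path components are exactly the `n - 1` nonempty slices.
-/

noncomputable section

open Real

/-- The extension `(0, v₁, …, v_n)` of a tuple `(v₁,…,v_n)` by `v₀ = 0`. -/
def vext (n : ℕ) (v : Fin n → ℝ) : Fin (n + 1) → ℝ := Fin.cons 0 v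

/-- The last coordinate `v_n` of the tuple `(v₁,…,v_n)`. -/
def vlast (n : ℕ) (v : Fin n → ℝ) : ℝ := vext n v (Fin.last n)

/-- The space `T_n^{AF}` of angle lifts of AF-type rod structures:
`0 = v₀ < v₁ < … < v_n`, consecutive gaps in `(0,π)`, and `v_n ∈ πℤ`. -/
def TsetAF (n : ℕ) : Set (Fin n → ℝ) :=
  {v | (∀ j : Fin n,
          0 < vext n v j.succ - vext n v j.castSucc ∧
          vext n v j.succ - vext n v j.castSucc < π) ∧
       ∃ k : ℤ, vlast n v = (k : ℝ) * π}

open Set AddSubgroup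

section Extension

variable {n : ℕ}

@[simp] lemma vext_zero (v : Fin n → ℝ) : vext n v 0 = 0 := rfl

@[simp] lemma vext_succ (v : Fin n → ℝ) (j : Fin n) : vext n v j.succ = v j := rfl

lemma vext_add (v w : Fin n → ℝ) : vext n (v + w) = vext n v + vext n w := by
  ext i
  cases i using Fin.cases <;> simp

lemma vext_smul (a : ℝ) (v : Fin n → ℝ) : vext n (a • v) = a • vext n v := by
  ext i
  cases i using Fin.cases <;> simp

lemma continuous_vlast : Continuous (vlast n) :=
  (continuous_apply _).comp (continuous_const.finCons continuous_id)

lemma vext_arithmetic_progression (c : ℝ) (i : Fin (n + 1)) :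
    vext n (fun j => ((j : ℕ) + 1) * c) i = (i : ℕ) * c := by
  cases i using Fin.cases <;> simp

lemma vlast_eq_sum (v : Fin n → ℝ) :
    vlast n v = ∑ j : Fin n, (vext n v j.succ - vext n v j.castSucc) := by
  cases n with
  | zero => simp [vlast]
  | succ m => rw [← Finset.Iic_top, Fin.sum_Iic_sub]; simp [vlast, Fin.top_eq_last]

end Extension

lemma Nat.card_zerothHomotopy_eq_card_range {X β : Type*} [TopologicalSpace X] (f : X → β)
    (hf : ∀ x y, Joined x y ↔ f x = f y) :
    Nat.card (ZerothHomotopy X) = Nat.card (range f) :=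
  Nat.card_congr ((Quotient.congrRight hf).trans (Setoid.quotientKerEquivRange f))

namespace TsetAF

variable {n : ℕ}

lemma vlast_mem_zmultiples {v : Fin n → ℝ} (hv : v ∈ TsetAF n) :
    vlast n v ∈ zmultiples π := by
  obtain ⟨k, hk⟩ := hv.2
  exact ⟨k, by simp [hk]⟩

lemma vlast_mem_Ioo (hn : 0 < n) {v : Fin n → ℝ} (hv : v ∈ TsetAF n) :
    vlast n v ∈ Ioo 0 (n * π) := by
  have : Nonempty (Fin n) := ⟨⟨0, hn⟩⟩
  rw [vlast_eq_sum]
  constructor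
  · exact Finset.sum_pos (fun j _ => (hv.1 j).1) Finset.univ_nonempty
  · calc _ < ∑ _j : Fin n, π :=
          Finset.sum_lt_sum_of_nonempty Finset.univ_nonempty fun j _ => (hv.1 j).2
      _ = n * π := by simp

theorem convex_slice (n : ℕ) (k : ℤ) : Convex ℝ {v ∈ TsetAF n | vlast n v = k * π} := by
  rintro v ⟨⟨hv, -⟩, hvk⟩ w ⟨⟨hw, -⟩, hwk⟩ a b ha hb hab
  have hlast : vlast n (a • v + b • w) = k * π := by
    simp only [vlast, vext_add, vext_smul] at hvk hwk ⊢
    simp only [Pi.add_apply, Pi.smul_apply, smul_eq_mul, hvk, hwk]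
    linear_combination (k * π) * hab
  refine ⟨⟨fun j => ?_, k, hlast⟩, hlast⟩
  have := convex_Ioo 0 π (hv j) (hw j) ha hb hab
  simp only [vext_add, vext_smul, Pi.add_apply, Pi.smul_apply, smul_eq_mul] at this ⊢
  constructor <;> linarith [this.1, this.2]

lemma slice_nonempty {k : ℤ} (hk : 1 ≤ k) (hkn : k ≤ (n : ℤ) - 1) :
    {v ∈ TsetAF n | vlast n v = k * π}.Nonempty := by
  have hn : (0 : ℝ) < n := by exact_mod_cast (by omega : (0 : ℤ) < n)
  have hk' : (1 : ℝ) ≤ k := by exact_mod_cast hk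
  have hkn' : (k : ℝ) < n := by exact_mod_cast (by omega : k < n)
  set c : ℝ := k * π / n
  have hc : c ∈ Ioo 0 π := by
    constructor
    · positivity
    · rw [div_lt_iff₀ hn]; nlinarith [pi_pos]
  have hlast : vlast n (fun j => ((j : ℕ) + 1) * c) = k * π := by
    simp only [vlast, vext_arithmetic_progression, Fin.val_last, c]; field_simp
  refine ⟨_, ⟨fun j => ?_, k, hlast⟩, hlast⟩
  rw [vext_arithmetic_progression, vext_arithmetic_progression]
  simpa [add_mul] using hc

lemma slice_nonempty_iff (hn : 0 < n) (k : ℤ) :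
    {v ∈ TsetAF n | vlast n v = k * π}.Nonempty ↔ 1 ≤ k ∧ k ≤ (n : ℤ) - 1 := by
  refine ⟨fun ⟨v, hv, hvk⟩ => ?_, fun ⟨hk, hkn⟩ => slice_nonempty hk hkn⟩
  obtain ⟨hpos, hlt⟩ := vlast_mem_Ioo hn hv
  rw [hvk] at hpos hlt
  have : 0 < k := by exact_mod_cast pos_of_mul_pos_left hpos pi_pos.le
  have : k < n := by exact_mod_cast lt_of_mul_lt_mul_right hlt pi_pos.le
  omega

lemma vlast_eq_of_joinedIn {v w : Fin n → ℝ} (h : JoinedIn (TsetAF n) v w) :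
    vlast n v = vlast n w := by
  obtain ⟨γ, hγ⟩ := h
  have hdisc : IsDiscrete (zmultiples π : Set ℝ) :=
    isDiscrete_iff_discreteTopology.2 (inferInstanceAs (DiscreteTopology (zmultiples π)))
  simpa using (isPreconnected_range γ.continuous).constant_of_mapsTo hdisc
    continuous_vlast.continuousOn (by rintro _ ⟨t, rfl⟩; exact vlast_mem_zmultiples (hγ t))
    (mem_range_self 0) (mem_range_self 1)

theorem joinedIn_iff {v w : Fin n → ℝ} (hv : v ∈ TsetAF n) (hw : w ∈ TsetAF n) :
    JoinedIn (TsetAF n) v w ↔ vlast n v = vlast n w := by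
  refine ⟨vlast_eq_of_joinedIn, fun h => ?_⟩
  obtain ⟨k, hk⟩ := hv.2
  exact ((convex_slice n k).isPathConnected ⟨v, hv, hk⟩ |>.joinedIn v ⟨hv, hk⟩ w ⟨hw, h ▸ hk⟩)
    |>.mono (sep_subset _ _)

lemma range_vlast (hn : 0 < n) :
    range (fun v : TsetAF n => vlast n v) = (fun k : ℤ => k * π) '' Icc 1 ((n : ℤ) - 1) := by
  ext x
  constructor
  · rintro ⟨⟨v, hv⟩, rfl⟩
    obtain ⟨k, hk⟩ := hv.2
    exact ⟨k, (slice_nonempty_iff hn k).1 ⟨v, hv, hk⟩, hk.symm⟩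
  · rintro ⟨k, ⟨hk, hkn⟩, rfl⟩
    obtain ⟨v, hv, hvk⟩ := slice_nonempty hk hkn
    exact ⟨⟨v, hv⟩, hvk⟩

end TsetAF

/-- **Proposition 3.10, AF case, in reduced coordinates.**
(a) each slice `{v ∈ T_n^{AF} : v_n = kπ}` is convex, and is nonempty exactly when
`1 ≤ k ≤ n−1`; (b) two points of `T_n^{AF}` are joined by a path in `T_n^{AF}` iff
`v_n = w_n`; (c) `T_n^{AF}` has exactly `n−1` path components, and `T₁^{AF} = ∅`. -/
theorem stmt15 (n : ℕ) (hn : 1 ≤ n) :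
    (∀ k : ℤ, Convex ℝ {v ∈ TsetAF n | vlast n v = (k : ℝ) * π}) ∧
    (∀ k : ℤ,
      ({v ∈ TsetAF n | vlast n v = (k : ℝ) * π}.Nonempty ↔ 1 ≤ k ∧ k ≤ (n : ℤ) - 1)) ∧
    (∀ v ∈ TsetAF n, ∀ w ∈ TsetAF n,
      (JoinedIn (TsetAF n) v w ↔ vlast n v = vlast n w)) ∧
    Nat.card (ZerothHomotopy ↥(TsetAF n)) = n - 1 ∧
    TsetAF 1 = ∅ := by
  refine ⟨TsetAF.convex_slice n, TsetAF.slice_nonempty_iff hn,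
    fun v hv w hw => TsetAF.joinedIn_iff hv hw, ?_, ?_⟩
  · have hjoined (v w : TsetAF n) : Joined v w ↔ vlast n v = vlast n w := by
      rw [← joinedIn_iff_joined v.2 w.2, TsetAF.joinedIn_iff v.2 w.2]
    have hinj : Function.Injective fun k : ℤ => (k : ℝ) * π :=
      (mul_left_injective₀ pi_ne_zero).comp Int.cast_injective
    rw [Nat.card_zerothHomotopy_eq_card_range _ hjoined, TsetAF.range_vlast hn,
      Nat.card_image_of_injective hinj]
    simp
  · refine eq_empty_of_forall_notMem fun v hv => ?_
    obtain ⟨k, hk⟩ := hv.2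
    have := (TsetAF.slice_nonempty_iff one_pos k).1 ⟨v, hv, hk⟩
    omega
end
end
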